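/- Let l_n := ℓ_0 (zℓ_0)^n act on ℍ = 𝕍[z,z^{-1}] as in the Virasoro setup, and consider the iterated bracket with multiplication operators by odd powers of z: l_{n;k_1,...,k_m} := {...{{l_n, z^{2k_1−1}}, z^{2k_2−1}}, ..., z^{2k_m−1}} (commutator brackets of operators). Then, acting on a monomial z^r φ where φ ∈ 𝕍 satisfies μφ = b·φ and working in the case ρ = 0, one has l_{n;k_1,...,k_m}(z^r φ) = (Δ_{2k_1−1}···Δ_{2k_m−1} ê_{n+1}(n,b))(r) · z^{∑_i(2k_i−1)+r+n} φ, where ê_{n+1}(n,b)(x) = ∏_{i=0}^{n}(x+i+b) and Δ_k is the difference operator. -/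

import Mathlib

/-!
On the monomials `z^r φ`, with `φ` an eigenvector of `μ` for the eigenvalue `b`, every operator
in sight is "diagonal of fixed degree": it sends `z^r φ` to `g(r) z^{r+d} φ` for a symbol
`g : ℂ → ℂ` and a degree `d`. The operator `ℓ_0` has symbol `x + b + 1/2` and degree `0`, so
`l_n` has symbol `∏_{i ≤ n} (x + i + b + 1/2)` and degree `n`. Bracketing a diagonal operator
with multiplication by `z^e` replaces its symbol `g` by `Δ_e g` and its degree `d` by `d + e`.
-/

/-- The operator `ℓ_0 = z d/dz + μ + 1/2` (the case `ρ = 0`) on `𝕍`-valued Laurent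
polynomials: on coefficients, `(ℓ_0 f)_i = i • f_i + μ(f_i) + (1/2) f_i`. -/
noncomputable def ellZero' {V : Type*} [AddCommGroup V] [Module ℂ V]
    (μ : V →ₗ[ℂ] V) (f : ℤ →₀ V) : ℤ →₀ V :=
  f.sum fun i v => Finsupp.single i ((i : ℂ) • v + μ v + (2 : ℂ)⁻¹ • v)

/-- `l_n := ℓ_0 ∘ (M_z ∘ ℓ_0)^n` with `ρ = 0`. -/
noncomputable def ellOp' {V : Type*} [AddCommGroup V] [Module ℂ V]
    (μ : V →ₗ[ℂ] V) (n : ℕ) : (ℤ →₀ V) → (ℤ →₀ V) :=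
  ellZero' μ ∘ (fun f => Finsupp.mapDomain (· + 1) (ellZero' μ f))^[n]

section Bracket

variable {R V ι : Type*} [Ring R] [AddCommGroup V] [Module R V]

theorem bracket_mapDomain_single {T : (ℤ →₀ V) → (ℤ →₀ V)} {g : R → R} {d : ℤ} {φ : V}
    (hT : ∀ r : ℤ, T (Finsupp.single r φ) = g r • Finsupp.single (r + d) φ) (e : ℤ) (r : ℤ) :
    T (Finsupp.mapDomain (· + e) (Finsupp.single r φ))
        - Finsupp.mapDomain (· + e) (T (Finsupp.single r φ))
      = (g (r + e) - g r) • Finsupp.single (r + (d + e)) φ := by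
  rw [Finsupp.mapDomain_single, hT, hT, Finsupp.mapDomain_smul, Finsupp.mapDomain_single,
    sub_smul, Int.cast_add, add_right_comm r e d, add_assoc]

theorem foldl_bracket_mapDomain_single (s : ι → ℤ) (t : ι → R) (hst : ∀ k, (s k : R) = t k)
    (ks : List ι) {T : (ℤ →₀ V) → (ℤ →₀ V)} {g : R → R} {d : ℤ} {φ : V}
    (hT : ∀ r : ℤ, T (Finsupp.single r φ) = g r • Finsupp.single (r + d) φ) (r : ℤ) :
    (ks.foldl
        (fun T k => fun f =>
          T (Finsupp.mapDomain (· + s k) f) - Finsupp.mapDomain (· + s k) (T f)) T)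
        (Finsupp.single r φ)
      = ((ks.foldl (fun g k => fun x => g (x + t k) - g x) g) r) •
          Finsupp.single (r + d + (ks.map s).sum) φ := by
  induction ks generalizing T g d with
  | nil => simpa using hT r
  | cons k ks ih =>
    have hstep (r : ℤ) :
        T (Finsupp.mapDomain (· + s k) (Finsupp.single r φ))
            - Finsupp.mapDomain (· + s k) (T (Finsupp.single r φ))
          = (g (r + t k) - g r) • Finsupp.single (r + (d + s k)) φ := by
      rw [bracket_mapDomain_single hT, hst]
    simpa only [List.foldl_cons, List.map_cons, List.sum_cons, add_assoc] using
      ih (T := fun f => T (Finsupp.mapDomain (· + s k) f) - Finsupp.mapDomain (· + s k) (T f))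
        (g := fun x => g (x + t k) - g x) hstep

end Bracket

section Eigenvector

variable {V : Type*} [AddCommGroup V] [Module ℂ V] {μ : V →ₗ[ℂ] V} {φ : V} {b : ℂ}

theorem ellZero'_smul_single (hφ : μ φ = b • φ) (c : ℂ) (r : ℤ) :
    ellZero' μ (c • Finsupp.single r φ) = (c * (r + b + 2⁻¹)) • Finsupp.single r φ := by
  rw [Finsupp.smul_single, ellZero', Finsupp.sum_single_index (by simp),
    map_smul, hφ, Finsupp.smul_single]
  congr 1
  module

theorem iterate_mapDomain_ellZero'_single (hφ : μ φ = b • φ) (n : ℕ) (r : ℤ) :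
    (fun f => Finsupp.mapDomain (· + 1) (ellZero' μ f))^[n] (Finsupp.single r φ)
      = (∏ i ∈ Finset.range n, ((r : ℂ) + i + b + 2⁻¹)) • Finsupp.single (r + n) φ := by
  induction n with
  | zero => simp
  | succ n ih =>
    rw [Function.iterate_succ_apply', ih, ellZero'_smul_single hφ, Finsupp.mapDomain_smul,
      Finsupp.mapDomain_single, Finset.prod_range_succ, Nat.cast_succ, ← add_assoc]
    congr 1
    push_cast
    ring

theorem ellOp'_single (hφ : μ φ = b • φ) (n : ℕ) (r : ℤ) :
    ellOp' μ n (Finsupp.single r φ)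
      = (∏ i ∈ Finset.range (n + 1), ((r : ℂ) + i + b + 2⁻¹)) • Finsupp.single (r + n) φ := by
  rw [ellOp', Function.comp_apply, iterate_mapDomain_ellZero'_single hφ,
    ellZero'_smul_single hφ, Finset.prod_range_succ]
  congr 1
  push_cast
  ring

end Eigenvector

theorem stmt_11_general (V : Type*) [AddCommGroup V] [Module ℂ V]
    (μ : V →ₗ[ℂ] V) (φ : V) (b : ℂ) (hφ : μ φ = b • φ)
    (n : ℕ) (ks : List ℕ) (r : ℤ) :
    (ks.foldl
        (fun T k => fun f =>
          T (Finsupp.mapDomain (· + (2 * (k : ℤ) - 1)) f)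
            - Finsupp.mapDomain (· + (2 * (k : ℤ) - 1)) (T f))
        (ellOp' μ n)) (Finsupp.single r φ)
      = ((ks.foldl
            (fun g k => fun x => g (x + (2 * (k : ℂ) - 1)) - g x)
            (fun x => ∏ i ∈ Finset.range (n + 1), (x + (i : ℂ) + b + 2⁻¹)))
          (r : ℂ)) •
        Finsupp.single (r + (n : ℤ) + (ks.map (fun k => 2 * (k : ℤ) - 1)).sum) φ := by
  -- the casts of `ks` to `List ℤ` and `List ℂ` elaborate as `do`-blocks
  simp only [bind_pure_comp, List.map_eq_map, List.foldl_map, List.map_map]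
  exact foldl_bracket_mapDomain_single (fun k : ℕ => 2 * (k : ℤ) - 1)
    (fun k : ℕ => 2 * (k : ℂ) - 1) (fun k => by push_cast; ring) ks (ellOp'_single hφ n) r

/-- for `φ` an eigenvector of `μ` with eigenvalue `b`, the iterated
commutator `l_{n;k_1,...,k_m} = {...{{l_n, z^{2k_1-1}}, ...}, z^{2k_m-1}}` acts on
the monomial `z^r φ` by
`l_{n;k_1,...,k_m}(z^r φ) = (Δ_{2k_1-1}···Δ_{2k_m-1} ê_{n+1}(n,b))(r) · z^{∑(2k_i-1)+r+n} φ`,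
where `ê_{n+1}(n,b)(x) = ∏_{i=0}^{n} (x + i + b + 1/2)` (the eigenvalue product of
`ℓ_0 = z d/dz + μ + 1/2`, i.e. with the shift convention `b ↦ b + 1/2`). -/
theorem stmt_11 (V : Type*) [AddCommGroup V] [Module ℂ V]
    (μ : V →ₗ[ℂ] V) (φ : V) (b : ℂ) (hφ : μ φ = b • φ)
    (n : ℕ) (ks : List ℕ) (hks : ∀ k ∈ ks, 1 ≤ k) (r : ℤ) :
    (ks.foldl
        (fun T k => fun f =>
          T (Finsupp.mapDomain (· + (2 * (k : ℤ) - 1)) f)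
            - Finsupp.mapDomain (· + (2 * (k : ℤ) - 1)) (T f))
        (ellOp' μ n)) (Finsupp.single r φ)
      = ((ks.foldl
            (fun g k => fun x => g (x + (2 * (k : ℂ) - 1)) - g x)
            (fun x => ∏ i ∈ Finset.range (n + 1), (x + (i : ℂ) + b + 2⁻¹)))
          (r : ℂ)) •
        Finsupp.single (r + (n : ℤ) + (ks.map (fun k => 2 * (k : ℤ) - 1)).sum) φ :=
  stmt_11_general V μ φ b hφ n ks r
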